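/- Define Q(α) = {x : x belongs to some thinness class β with N⁻(β)=N⁻(α) and N(β)⊆N(α)}. Then: (i) β⊆Q(α) implies σ(β)=σ(α); (ii) β⊆Q(α) implies Q(β)⊆Q(α); (iii) β⊆Q(α) implies R(β)⊆R(α), where R(γ)=N(γ)∪N(N(γ))∪⋯; (iv) α∩N(β)=∅ implies Q(α)∩N(β)=∅; (v) α∩N(N(β))=∅ implies Q(α)∩N(N(β))=∅. -/

import Mathlib

/-- Arc relation of the best match graph of a leaf-colored tree.
The tree is represented by its ancestor order: a sup-semilattice `V` (lca = sup,
`x ≤ y` meaning `y` is an ancestor of `x`), `ι : L → V` embeds the leaves, and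
`σ : L → S` colors the leaves.  `bmArc ι σ x y` holds iff `y` is a best match of `x`. -/
def bmArc {V L S : Type} [SemilatticeSup V] (ι : L → V) (σ : L → S) (x y : L) : Prop :=
  σ x ≠ σ y ∧ ∀ y' : L, σ y' = σ y → ι x ⊔ ι y ≤ ι x ⊔ ι y'

/-- Out-neighborhood of a vertex in a digraph given as a relation. -/
def outN {L : Type} (G : L → L → Prop) (x : L) : Set L := {y | G x y}

/-- In-neighborhood of a vertex. -/
def inN {L : Type} (G : L → L → Prop) (x : L) : Set L := {y | G y x}

/-- Thinness class of a vertex: all vertices with identical in- and out-neighborhoods. -/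
def thinClass {L : Type} (G : L → L → Prop) (x : L) : Set L :=
  {y | outN G y = outN G x ∧ inN G y = inN G x}

/-- Out-neighborhood of a set of vertices. -/
def setN {L : Type} (G : L → L → Prop) (A : Set L) : Set L := {y | ∃ a ∈ A, G a y}

/-- In-neighborhood of a set of vertices. -/
def setNin {L : Type} (G : L → L → Prop) (A : Set L) : Set L := {y | ∃ a ∈ A, G y a}

/-- Reachable set `R(A) = N(A) ∪ N(N(A)) ∪ ⋯`. -/
def reachSet {L : Type} (G : L → L → Prop) (A : Set L) : Set L :=
  ⋃ n : ℕ, (setN G)^[n + 1] A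

/-- The underlying undirected (simple) graph of a best match graph. -/
def bmGraph {V L S : Type} [SemilatticeSup V] (ι : L → V) (σ : L → S) : SimpleGraph L where
  Adj x y := bmArc ι σ x y ∨ bmArc ι σ y x
  symm := ⟨fun _ _ h => h.symm⟩
  loopless := ⟨fun _ h => by rcases h with h | h <;> exact h.1 rfl⟩

/-- The underlying undirected (simple) graph of an abstract digraph. -/
def relGraph {L : Type} (G : L → L → Prop) : SimpleGraph L where
  Adj x y := x ≠ y ∧ (G x y ∨ G y x)
  symm := ⟨fun _ _ h => ⟨h.1.symm, h.2.symm⟩⟩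
  loopless := ⟨fun _ h => h.1 rfl⟩

/-- `Qset G a` is the union of all thinness classes `β` with `N⁻(β) = N⁻(α)` and
`N(β) ⊆ N(α)`, where `α` is the thinness class of `a`. -/
def Qset {L : Type} (G : L → L → Prop) (a : L) : Set L :=
  {x | inN G x = inN G a ∧ outN G x ⊆ outN G a}


lemma setN_mono {L : Type} (G : L → L → Prop) {A B : Set L} (h : A ⊆ B) :
    setN G A ⊆ setN G B := fun _ ⟨c, hc, hcy⟩ => ⟨c, h hc, hcy⟩

lemma setN_iter_mono {L : Type} (G : L → L → Prop) (n : ℕ) {A B : Set L} (h : A ⊆ B) :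
    (setN G)^[n] A ⊆ (setN G)^[n] B := by
  induction n generalizing A B with
  | zero => exact h
  | succ n ih =>
    rw [Function.iterate_succ_apply, Function.iterate_succ_apply]
    exact ih (setN_mono G h)

lemma setN_thinClass {L : Type} (G : L → L → Prop) (b : L) :
    setN G (thinClass G b) = outN G b := by
  ext y
  constructor
  · rintro ⟨c, ⟨hco, _⟩, hcy⟩
    rw [← hco]; exact hcy
  · intro hy; exact ⟨b, ⟨rfl, rfl⟩, hy⟩

theorem stmt17 {L S : Type} [Fintype L] (G : L → L → Prop) (σ : L → S)
    (s t : S) (hst : s ≠ t) (hS : ∀ u : S, u = s ∨ u = t)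
    (hsurj : Function.Surjective σ)
    (harc : ∀ x y : L, G x y → σ x ≠ σ y)
    (hout : ∀ x : L, ∃ y : L, G x y)
    (hconn : (relGraph G).Connected) :
    ∀ a b : L,
      (∀ x ∈ Qset G a, σ x = σ a) ∧
      (∀ x ∈ Qset G a, Qset G x ⊆ Qset G a) ∧
      (∀ x ∈ Qset G a, reachSet G (thinClass G x) ⊆ reachSet G (thinClass G a)) ∧
      (thinClass G a ∩ setN G (thinClass G b) = ∅ →
        Qset G a ∩ setN G (thinClass G b) = ∅) ∧
      (thinClass G a ∩ setN G (setN G (thinClass G b)) = ∅ →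
        Qset G a ∩ setN G (setN G (thinClass G b)) = ∅) := by
  intro a b
  refine ⟨?_, ?_, ?_, ?_, ?_⟩
  · rintro x ⟨hin, hsub⟩
    obtain ⟨z, hz⟩ := hout x
    have hxz : σ x ≠ σ z := harc x z hz
    have haz : σ a ≠ σ z := harc a z (hsub hz)
    rcases hS (σ x) with hx | hx <;> rcases hS (σ a) with ha | ha <;>
      rcases hS (σ z) with hzc | hzc <;> simp_all
  · rintro x ⟨hin, hsub⟩ y ⟨hin', hsub'⟩
    exact ⟨hin' ▸ hin ▸ rfl, fun w hw => hsub (hsub' hw)⟩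
  · rintro x ⟨hin, hsub⟩ y hy
    simp only [reachSet, Set.mem_iUnion] at hy ⊢
    obtain ⟨n, hn⟩ := hy
    refine ⟨n, ?_⟩
    rw [Function.iterate_succ_apply] at hn ⊢
    rw [setN_thinClass] at hn ⊢
    exact setN_iter_mono G n hsub hn
  · intro hemp
    ext y
    simp only [Set.mem_inter_iff, Set.mem_empty_iff_false, iff_false, not_and]
    rintro ⟨hin, hsub⟩ hy
    rw [setN_thinClass] at hy
    have : G b y := hy
    have : b ∈ inN G y := this
    rw [hin] at this
    have ha : a ∈ thinClass G a ∩ setN G (thinClass G b) := by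
      refine ⟨⟨rfl, rfl⟩, ?_⟩
      rw [setN_thinClass]; exact this
    rw [hemp] at ha; exact ha
  · intro hemp
    ext y
    simp only [Set.mem_inter_iff, Set.mem_empty_iff_false, iff_false, not_and]
    rintro ⟨hin, hsub⟩ hy
    obtain ⟨c, hc, hcy⟩ := hy
    have : c ∈ inN G y := hcy
    rw [hin] at this
    have ha : a ∈ thinClass G a ∩ setN G (setN G (thinClass G b)) :=
      ⟨⟨rfl, rfl⟩, ⟨c, hc, this⟩⟩
    rw [hemp] at ha; exact ha
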